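/- arXiv:1010.2991 — 3 statements merged into one kernel-verified Lean document; each statement's English description precedes it below -/
import Mathlib

section
/- Let C ⊆ E be a convex set and F a proper face of C. Then the smallest exposed face sup⊥(F) of C containing F is a proper exposed face of C and equals ⋂_{u ∈ N(C,F)\{0}} F⊥(C,u); the relative interior ri(N(C,F)) contains a nonzero vector, and for every nonzero v ∈ ri(N(C,F)) one has sup⊥(F) = F⊥(C,v); furthermore N(C, sup⊥(F)) = N(C,F). -/
/-!
Fix `x ∈ ri F` and let `N = N(C,x)`. A linear function maximised over a set at a relative
interior point is constant on that set, so `N(C,F) = N = {u | F ⊆ F⊥(C,u)}`. For `v ∈ ri N` and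
`y ∈ F⊥(C,v)`, the linear function `w ↦ ⟪w, y - x⟫` is `≤ 0` on `N` and vanishes at `v`, hence on
all of `N`; so `F⊥(C,v) ⊆ F⊥(C,u)` for every `u ∈ N`, i.e. `F⊥(C,v)` is the smallest exposed face
containing `F`, and its normal cone is again `N`. Properness comes from a supporting hyperplane:
`x ∉ ri C` since `F` is a proper face, and separating `x` from the interior of `C` within its
affine span gives `u₀ ∈ N` that is not constant on `C`; then `F⊥(C,v) ⊆ F⊥(C,u₀) ≠ C`, which also
forces `v ≠ 0`.
-/

open scoped Pointwise RealInnerProductSpace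

variable {E : Type*} [NormedAddCommGroup E] [InnerProductSpace ℝ E] [FiniteDimensional ℝ E]

/-- `F` is a face of the convex set `C`: a convex subset of `C` such that whenever an open
segment between two points of `C` meets `F`, both endpoints belong to `F`. -/
def IsFace (C F : Set E) : Prop :=
  Convex ℝ F ∧ F ⊆ C ∧
    ∀ x ∈ C, ∀ y ∈ C, (openSegment ℝ x y ∩ F).Nonempty → x ∈ F ∧ y ∈ F

/-- The exposed face `F⊥(C,u)` of `C` by the vector `u`: the points of `C` where `⟨u,·⟩`
attains its supremum over `C`. -/
def expFace (C : Set E) (u : E) : Set E :=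
  {x ∈ C | ∀ y ∈ C, ⟪u, y⟫ ≤ ⟪u, x⟫}

/-- `F` is an exposed face of `C`: either `∅`, or `C`, or `F⊥(C,u)` for some nonzero `u`. -/
def IsExpFace (C F : Set E) : Prop :=
  F = ∅ ∨ F = C ∨ ∃ u : E, u ≠ 0 ∧ F = expFace C u

/-- The normal cone `N(C,x)` of `C` at the point `x`. -/
def normalCone (C : Set E) (x : E) : Set E :=
  {u | ∀ y ∈ C, ⟪u, y - x⟫ ≤ 0}

/-- The normal cone `N(C,F)` of `C` at a subset `F`; for a nonempty convex `F ⊆ C` it agrees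
with `normalCone C x` for any `x` in the relative interior of `F` (all these coincide), and
for `F = ∅` it is all of `E`. -/
def normalConeOf (C F : Set E) : Set E :=
  ⋂ x ∈ intrinsicInterior ℝ F, normalCone C x

/-- `N` is a normal cone of `C`: the normal cone of some face of `C`. -/
def IsNormalCone (C N : Set E) : Prop :=
  ∃ F, IsFace C F ∧ N = normalConeOf C F

/-- `T` is a touching cone of `C`: a nonempty face of a normal cone of `C`. -/
def IsTouchingCone (C T : Set E) : Prop :=
  T.Nonempty ∧ ∃ N, IsNormalCone C N ∧ IsFace N T

/-- The positive hull of a set: all finite nonnegative combinations (`posHull ∅ = {0}`). -/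
def posHull (S : Set E) : Set E :=
  {x | ∃ (k : ℕ) (c : Fin k → ℝ) (s : Fin k → E),
    (∀ i, 0 ≤ c i) ∧ (∀ i, s i ∈ S) ∧ x = ∑ i, c i • s i}

/-- A vector `u` is sharp normal for `C` if every `x ∈ ri(F⊥(C,u))` satisfies
`u ∈ ri(N(C,x))`. -/
def SharpNormal (C : Set E) (u : E) : Prop :=
  ∀ x ∈ intrinsicInterior ℝ (expFace C u), u ∈ intrinsicInterior ℝ (normalCone C x)

/-- A point `x` is sharp exposed in `C` if every nonzero `u ∈ ri(N(C,x))` satisfies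
`x ∈ ri(F⊥(C,u))`. -/
def SharpExposed (C : Set E) (x : E) : Prop :=
  ∀ u ∈ intrinsicInterior ℝ (normalCone C x), u ≠ 0 → x ∈ intrinsicInterior ℝ (expFace C u)

/-- The smallest exposed face of `C` containing `F`: the intersection of all exposed faces
of `C` containing `F`. -/
def supExp (C F : Set E) : Set E :=
  ⋂₀ {G | IsExpFace C G ∧ F ⊆ G}

/-- The polar body of `K`. -/
def polarBody (K : Set E) : Set E := {u | ∀ y ∈ K, ⟪u, y⟫ ≤ 1}

section RelativeInterior

variable {V : Type*} [NormedAddCommGroup V] [NormedSpace ℝ V]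

theorem add_mem_intrinsicInterior_iff {S : Set V} {x : V} (hx : x ∈ S)
    (v : (affineSpan ℝ S).direction) :
    (v : V) + x ∈ intrinsicInterior ℝ S ↔
      v ∈ interior {w : (affineSpan ℝ S).direction | (w : V) + x ∈ S} := by
  let p : affineSpan ℝ S := ⟨x, subset_affineSpan ℝ S hx⟩
  have : Nonempty (affineSpan ℝ S) := ⟨p⟩
  let φ := (AffineIsometryEquiv.vaddConst ℝ p).toHomeomorph
  have hA : {w : (affineSpan ℝ S).direction | (w : V) + x ∈ S} = φ ⁻¹' ((↑) ⁻¹' S) := rfl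
  rw [hA, ← φ.preimage_interior]
  exact Subtype.val_injective.mem_set_image (a := φ v)

theorem exists_add_smul_sub_mem_of_mem_intrinsicInterior {S : Set V} {x y : V}
    (hx : x ∈ intrinsicInterior ℝ S) (hy : y ∈ affineSpan ℝ S) :
    ∃ ε : ℝ, 0 < ε ∧ x + ε • (x - y) ∈ S := by
  have hxS := intrinsicInterior_subset hx
  set A : Set (affineSpan ℝ S).direction := {w | (w : V) + x ∈ S}
  let d : (affineSpan ℝ S).direction :=
    ⟨x - y, AffineSubspace.vsub_mem_direction (subset_affineSpan ℝ S hxS) hy⟩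
  have h0 : 0 ∈ interior A := by
    rw [← add_mem_intrinsicInterior_iff hxS]; simpa using hx
  have hnear : ∀ᶠ t : ℝ in nhds 0, t • d ∈ A :=
    (continuous_id.smul continuous_const).continuousAt.preimage_mem_nhds
      (by simpa using mem_interior_iff_mem_nhds.1 h0)
  obtain ⟨ε, hεS, hε⟩ :=
    ((hnear.filter_mono nhdsWithin_le_nhds).and (self_mem_nhdsWithin (s := Set.Ioi 0))).exists
  exact ⟨ε, hε, by simpa [A, d, add_comm] using hεS⟩

end RelativeInterior

section InnerProductSpace

variable {W : Type*} [NormedAddCommGroup W] [InnerProductSpace ℝ W]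

theorem inner_eq_of_mem_intrinsicInterior {S : Set W} {x u : W}
    (hx : x ∈ intrinsicInterior ℝ S) (hmax : ∀ y ∈ S, ⟪u, y⟫ ≤ ⟪u, x⟫) {y : W} (hy : y ∈ S) :
    ⟪u, y⟫ = ⟪u, x⟫ := by
  obtain ⟨ε, hε, hz⟩ :=
    exists_add_smul_sub_mem_of_mem_intrinsicInterior hx (subset_affineSpan ℝ S hy)
  have hzx := hmax _ hz
  rw [inner_add_right, real_inner_smul_right, inner_sub_right] at hzx
  nlinarith [hmax y hy]

theorem exists_inner_sub_neg_of_notMem_intrinsicInterior [FiniteDimensional ℝ W] {C : Set W}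
    (hC : Convex ℝ C) {x : W} (hx : x ∈ C) (hxri : x ∉ intrinsicInterior ℝ C) :
    ∃ u, (∀ y ∈ C, ⟪u, y - x⟫ ≤ 0) ∧ ∃ y ∈ C, ⟪u, y - x⟫ < 0 := by
  have hdir : ∀ y ∈ C, y - x ∈ (affineSpan ℝ C).direction := fun y hy =>
    AffineSubspace.vsub_mem_direction (subset_affineSpan ℝ C hy) (subset_affineSpan ℝ C hx)
  set A : Set (affineSpan ℝ C).direction := {w | (w : W) + x ∈ C}
  have hA : Convex ℝ A := (hC.translate_preimage_left x).linear_preimage (Submodule.subtype _)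
  have h0 : 0 ∉ interior A := by
    rw [← add_mem_intrinsicInterior_iff hx]; simpa using hxri
  have hAne : (interior A).Nonempty := by
    obtain ⟨a, ha⟩ := Set.Nonempty.intrinsicInterior hC ⟨x, hx⟩
    refine ⟨⟨a - x, hdir a (intrinsicInterior_subset ha)⟩, ?_⟩
    rw [← add_mem_intrinsicInterior_iff hx]; simpa using ha
  obtain ⟨f, hf0, hf⟩ := geometric_hahn_banach_of_nonempty_interior_point hA h0 hAne
  set w := (InnerProductSpace.toDual ℝ _).symm f
  have hwC : ∀ y ∈ C, ⟪(w : W), y - x⟫ ≤ 0 := fun y hy => by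
    rw [← map_zero f]
    exact (InnerProductSpace.toDual_symm_apply (x := ⟨y - x, hdir y hy⟩)).trans_le
      (hf _ (by simpa [A] using hy))
  refine ⟨w, hwC, ?_⟩
  by_contra! hle
  -- `w` lies in the direction of `affineSpan ℝ C`, which is spanned by `C - x`, and is orthogonal
  -- to `C - x`: so `w = 0`, contradicting `f ≠ 0`.
  have hperp : Submodule.span ℝ ((· -ᵥ x) '' C) ≤ (ℝ ∙ (w : W))ᗮ := by
    rw [Submodule.span_le]
    rintro _ ⟨y, hy, rfl⟩
    exact Submodule.mem_orthogonal_singleton_iff_inner_right.2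
      (le_antisymm (hwC y hy) (hle y hy))
  have hwspan : (w : W) ∈ Submodule.span ℝ ((· -ᵥ x) '' C) := by
    rw [← vectorSpan_eq_span_vsub_set_right ℝ hx, ← direction_affineSpan]; exact w.2
  have hw : w = 0 := by
    have := Submodule.mem_orthogonal_singleton_iff_inner_right.1 (hperp hwspan)
    exact_mod_cast inner_self_eq_zero.1 this
  exact hf0 (by simpa [w] using hw)

variable {C F G : Set W} {x u v : W}

theorem IsFace.subset_of_mem_intrinsicInterior (hF : IsFace C F) (hxF : x ∈ F)
    (hx : x ∈ intrinsicInterior ℝ C) : C ⊆ F := by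
  intro c hc
  obtain ⟨ε, hε, hz⟩ :=
    exists_add_smul_sub_mem_of_mem_intrinsicInterior hx (subset_affineSpan ℝ C hc)
  have hseg : x ∈ openSegment ℝ c (x + ε • (x - c)) := by
    refine ⟨ε / (1 + ε), 1 / (1 + ε), by positivity, by positivity, by field_simp; ring, ?_⟩
    match_scalars <;> field_simp
    ring
  exact (hF.2.2 c hc _ hz ⟨x, hseg, hxF⟩).1

theorem convex_normalCone (C : Set W) (x : W) : Convex ℝ (normalCone C x) := by
  intro u hu w hw a b ha hb _ y hy
  rw [inner_add_left, real_inner_smul_left, real_inner_smul_left]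
  exact add_nonpos (mul_nonpos_of_nonneg_of_nonpos ha (hu y hy))
    (mul_nonpos_of_nonneg_of_nonpos hb (hw y hy))

theorem convex_expFace (hC : Convex ℝ C) (u : W) : Convex ℝ (expFace C u) := by
  intro p hp q hq a b ha hb hab
  refine ⟨hC hp.1 hq.1 ha hb hab, fun y hy => ?_⟩
  rw [inner_add_right, real_inner_smul_right, real_inner_smul_right]
  calc ⟪u, y⟫ = a * ⟪u, y⟫ + b * ⟪u, y⟫ := by rw [← add_mul, hab, one_mul]
    _ ≤ a * ⟪u, p⟫ + b * ⟪u, q⟫ :=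
      add_le_add (mul_le_mul_of_nonneg_left (hp.2 y hy) ha)
        (mul_le_mul_of_nonneg_left (hq.2 y hy) hb)

theorem expFace_zero (C : Set W) : expFace C 0 = C := by
  simp [expFace]

theorem mem_normalCone_iff_mem_expFace (hx : x ∈ C) : u ∈ normalCone C x ↔ x ∈ expFace C u := by
  simp [normalCone, expFace, hx, inner_sub_right]

theorem normalCone_eq_setOf_subset_expFace (hGC : G ⊆ C) (hx : x ∈ intrinsicInterior ℝ G) :
    normalCone C x = {u | G ⊆ expFace C u} := by
  have hxG := intrinsicInterior_subset hx
  ext u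
  refine ⟨fun hu y hy => ⟨hGC hy, fun z hz => ?_⟩, fun hu => ?_⟩
  · have hmax := (mem_normalCone_iff_mem_expFace (hGC hxG)).1 hu
    rw [inner_eq_of_mem_intrinsicInterior hx (fun y hy => hmax.2 y (hGC hy)) hy]
    exact hmax.2 z hz
  · exact (mem_normalCone_iff_mem_expFace (hGC hxG)).2 (hu hxG)

theorem normalConeOf_eq_setOf_subset_expFace (hGC : G ⊆ C)
    (hG : (intrinsicInterior ℝ G).Nonempty) :
    normalConeOf C G = {u | G ⊆ expFace C u} := by
  obtain ⟨x, hx⟩ := hG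
  refine subset_antisymm (fun u hu => ?_) (Set.subset_iInter₂ fun y hy => ?_)
  · rw [← normalCone_eq_setOf_subset_expFace hGC hx]
    exact Set.mem_iInter₂.1 hu x hx
  · rw [normalCone_eq_setOf_subset_expFace hGC hy]

theorem expFace_subset_of_mem_intrinsicInterior_normalCone (hx : x ∈ C)
    (hv : v ∈ intrinsicInterior ℝ (normalCone C x)) (hu : u ∈ normalCone C x) :
    expFace C v ⊆ expFace C u := by
  intro y hy
  have hvy : ⟪y - x, v⟫ = 0 := by
    rw [real_inner_comm]
    refine le_antisymm (intrinsicInterior_subset hv y hy.1) ?_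
    rw [inner_sub_right, sub_nonneg]
    exact hy.2 x hx
  have huy := inner_eq_of_mem_intrinsicInterior hv
    (fun w hw => by rw [hvy, real_inner_comm]; exact hw y hy.1) hu
  rw [hvy, real_inner_comm, inner_sub_right, sub_eq_zero] at huy
  refine ⟨hy.1, fun z hz => ?_⟩
  rw [huy]
  exact ((mem_normalCone_iff_mem_expFace hx).1 hu).2 z hz

theorem supExp_eq_expFace (hF : F.Nonempty) (hv : v ≠ 0) (hFv : F ⊆ expFace C v)
    (hmin : ∀ u, F ⊆ expFace C u → expFace C v ⊆ expFace C u) :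
    supExp C F = expFace C v := by
  refine subset_antisymm (Set.sInter_subset_of_mem ⟨Or.inr (Or.inr ⟨v, hv, rfl⟩), hFv⟩) ?_
  refine Set.subset_sInter fun G ⟨hG, hFG⟩ => ?_
  rcases hG with rfl | rfl | ⟨u, -, rfl⟩
  · exact absurd (Set.subset_empty_iff.1 hFG) hF.ne_empty
  · exact fun y hy => hy.1
  · exact hmin u hFG

theorem supExp_eq_expFace_of_mem_intrinsicInterior (hFC : F ⊆ C)
    (hx : x ∈ intrinsicInterior ℝ F) (hv : v ∈ intrinsicInterior ℝ (normalCone C x))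
    (hv0 : v ≠ 0) : supExp C F = expFace C v := by
  have hxF := intrinsicInterior_subset hx
  have hN := normalCone_eq_setOf_subset_expFace hFC hx
  exact supExp_eq_expFace ⟨x, hxF⟩ hv0 (hN.subset (intrinsicInterior_subset hv)) fun u hu =>
    expFace_subset_of_mem_intrinsicInterior_normalCone (hFC hxF) hv (hN.superset hu)

theorem normalConeOf_expFace_eq_normalCone [FiniteDimensional ℝ W] (hC : Convex ℝ C)
    (hx : x ∈ C) (hv : v ∈ intrinsicInterior ℝ (normalCone C x)) :
    normalConeOf C (expFace C v) = normalCone C x := by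
  have hxv := (mem_normalCone_iff_mem_expFace hx).1 (intrinsicInterior_subset hv)
  rw [normalConeOf_eq_setOf_subset_expFace (fun y hy => hy.1)
    (Set.Nonempty.intrinsicInterior (convex_expFace hC v) ⟨x, hxv⟩)]
  ext u
  exact ⟨fun h => (mem_normalCone_iff_mem_expFace hx).2 (h hxv),
    expFace_subset_of_mem_intrinsicInterior_normalCone hx hv⟩

end InnerProductSpace

/-- For a proper face `F` of a convex set `C`: the smallest exposed face
`sup⊥(F)` is a proper exposed face, equals `⋂_{u ∈ N(C,F)\{0}} F⊥(C,u)`; `ri(N(C,F))`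
contains a nonzero vector; for every nonzero `v ∈ ri(N(C,F))`, `sup⊥(F) = F⊥(C,v)`;
and `N(C, sup⊥(F)) = N(C,F)`. -/
theorem stmt_5 (C : Set E) (hC : Convex ℝ C) (F : Set E) (hF : IsFace C F)
    (hFne : F ≠ ∅) (hFC : F ≠ C) :
    IsExpFace C (supExp C F) ∧ supExp C F ≠ ∅ ∧ supExp C F ≠ C ∧
    supExp C F = ⋂ u ∈ normalConeOf C F \ {0}, expFace C u ∧
    (∃ v ∈ intrinsicInterior ℝ (normalConeOf C F), v ≠ 0) ∧
    (∀ v ∈ intrinsicInterior ℝ (normalConeOf C F), v ≠ 0 → supExp C F = expFace C v) ∧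
    normalConeOf C (supExp C F) = normalConeOf C F := by
  have hFsub := hF.2.1
  obtain ⟨x, hx⟩ := Set.Nonempty.intrinsicInterior hF.1 (Set.nonempty_iff_ne_empty.2 hFne)
  have hxF := intrinsicInterior_subset hx
  have hxC := hFsub hxF
  have hN : normalConeOf C F = normalCone C x := by
    rw [normalConeOf_eq_setOf_subset_expFace hFsub ⟨x, hx⟩,
      normalCone_eq_setOf_subset_expFace hFsub hx]
  have hxri : x ∉ intrinsicInterior ℝ C := fun h =>
    hFC (subset_antisymm hFsub (hF.subset_of_mem_intrinsicInterior hxF h))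
  obtain ⟨u₀, hu₀, y₀, hy₀, hlt⟩ := exists_inner_sub_neg_of_notMem_intrinsicInterior hC hxC hxri
  have hproper : ∀ v ∈ intrinsicInterior ℝ (normalCone C x), expFace C v ≠ C := fun v hv h =>
    have hy₀u₀ := expFace_subset_of_mem_intrinsicInterior_normalCone hxC hv hu₀ (h.symm ▸ hy₀)
    hlt.not_ge (by rw [inner_sub_right, sub_nonneg]; exact hy₀u₀.2 x hxC)
  have hv0 : ∀ v ∈ intrinsicInterior ℝ (normalCone C x), v ≠ 0 := fun v hv h =>
    hproper v hv (h ▸ expFace_zero C)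
  obtain ⟨v, hv⟩ := Set.Nonempty.intrinsicInterior (convex_normalCone C x) ⟨u₀, hu₀⟩
  have hsup := supExp_eq_expFace_of_mem_intrinsicInterior hFsub hx hv (hv0 v hv)
  rw [hN, hsup]
  refine ⟨Or.inr (Or.inr ⟨v, hv0 v hv, rfl⟩), ?_, hproper v hv, ?_, ⟨v, hv, hv0 v hv⟩,
    fun w hw hw0 => hsup.symm.trans (supExp_eq_expFace_of_mem_intrinsicInterior hFsub hx hw hw0),
    normalConeOf_expFace_eq_normalCone hC hxC hv⟩
  · exact (Set.nonempty_of_mem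
      ((mem_normalCone_iff_mem_expFace hxC).1 (intrinsicInterior_subset hv))).ne_empty
  · refine subset_antisymm (Set.subset_iInter₂ fun u hu => ?_)
      (Set.iInter₂_subset v ⟨intrinsicInterior_subset hv, hv0 v hv⟩)
    exact expFace_subset_of_mem_intrinsicInterior_normalCone hxC hv hu.1
end

section
/- Let C ⊆ E be a convex set and let N be a proper normal cone of C. Then for every nonzero v ∈ N: the exposed face F⊥(C,v) is nonempty, the normal cone N(C, F⊥(C,v)) is a face of N, and the unique face of N(C, F⊥(C,v)) whose relative interior contains v equals the unique face of N whose relative interior contains v. In particular, the touching cones of C are exactly the nonempty faces of normal cones of C. -/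
open scoped Pointwise RealInnerProductSpace

variable {E : Type*} [NormedAddCommGroup E] [InnerProductSpace ℝ E] [FiniteDimensional ℝ E]

set_option linter.unusedSectionVars false

lemma exists_openSegment_of_mem_intrinsicInterior (G : Set E) {x y : E}
    (hx : x ∈ intrinsicInterior ℝ G) (hy : y ∈ G) :
    ∃ z ∈ G, x ∈ openSegment ℝ y z := by
  rw [mem_intrinsicInterior] at hx
  obtain ⟨x', hx', rfl⟩ := hx
  have hyA : y ∈ affineSpan ℝ G := subset_affineSpan ℝ G hy
  have hmem : ∀ t : ℝ, (x' : E) + t • ((x' : E) - y) ∈ affineSpan ℝ G := by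
    intro t
    have := AffineSubspace.smul_vsub_vadd_mem (affineSpan ℝ G) t x'.2 hyA x'.2
    simpa [vsub_eq_sub, vadd_eq_add, add_comm] using this
  set f : ℝ → affineSpan ℝ G := fun t => ⟨(x' : E) + t • ((x' : E) - y), hmem t⟩ with hf_def
  have hf : Continuous f := by
    apply Continuous.subtype_mk
    fun_prop
  have h0 : f 0 = x' := by
    apply Subtype.ext
    simp [hf_def]
  have hnhds : f ⁻¹' (interior ((↑) ⁻¹' G : Set <| affineSpan ℝ G)) ∈ nhds (0 : ℝ) :=
    hf.continuousAt.preimage_mem_nhds (isOpen_interior.mem_nhds (h0 ▸ hx'))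
  obtain ⟨ε, hε, hball⟩ := Metric.mem_nhds_iff.1 hnhds
  have htmem : (ε / 2 : ℝ) ∈ Metric.ball (0 : ℝ) ε := by
    simp [Real.dist_eq, abs_of_pos (half_pos hε), half_lt_self hε, abs_of_pos hε]
  set t : ℝ := ε / 2 with ht_def
  have ht : 0 < t := half_pos hε
  have hz : ((x' : E) + t • ((x' : E) - y)) ∈ G := by
    have := interior_subset (hball htmem)
    exact this
  refine ⟨_, hz, ?_⟩
  have h1t : (1 : ℝ) + t ≠ 0 := by positivity
  refine ⟨t / (1 + t), 1 / (1 + t), by positivity, by positivity, ?_, ?_⟩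
  · field_simp
    ring
  · match_scalars <;> field_simp <;> ring

lemma normalCone_convex (C : Set E) (x : E) : Convex ℝ (normalCone C x) := by
  intro u hu w hw a b ha hb hab
  intro y hy
  have h1 := hu y hy
  have h2 := hw y hy
  rw [inner_add_left, real_inner_smul_left, real_inner_smul_left]
  nlinarith

lemma mem_normalConeOf {C F : Set E} {v : E} :
    v ∈ normalConeOf C F ↔ ∀ x ∈ intrinsicInterior ℝ F, v ∈ normalCone C x := by
  simp [normalConeOf]

/-- Key lemma: if `u` is normal to `C` at a relative interior point `x` of `G ⊆ C`, then
`⟪u, p - x⟫ = 0` for every `p ∈ G`, and `u` is normal at `p` too. -/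
lemma key_lemma {C G : Set E} (hGC : G ⊆ C) {x u p : E} (hx : x ∈ intrinsicInterior ℝ G)
    (hp : p ∈ G) (hu : u ∈ normalCone C x) :
    ⟪u, p - x⟫ = 0 ∧ u ∈ normalCone C p := by
  have le1 : ⟪u, p - x⟫ ≤ 0 := hu p (hGC hp)
  obtain ⟨z, hz, a, b, ha, hb, hab, hxe⟩ := exists_openSegment_of_mem_intrinsicInterior G hx hp
  have le2 : ⟪u, z - x⟫ ≤ 0 := hu z (hGC hz)
  have hcombo : a • (p - x) + b • (z - x) = 0 := by
    have h1 : a • (p - x) + b • (z - x) = (a • p + b • z) - (a + b) • x := by module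
    rw [h1, hxe, hab, one_smul, sub_self]
  have sum0 : a * ⟪u, p - x⟫ + b * ⟪u, z - x⟫ = 0 := by
    rw [← real_inner_smul_right, ← real_inner_smul_right, ← inner_add_right, hcombo,
      inner_zero_right]
  have h0 : ⟪u, p - x⟫ = 0 := by nlinarith
  refine ⟨h0, ?_⟩
  intro y hy
  have h1 := hu y hy
  have h2 : y - p = (y - x) - (p - x) := by abel
  rw [h2, inner_sub_right, h0]
  linarith

lemma face_sub {N T T' : Set E} (hT' : IsFace N T') (hTN : T ⊆ N) {v : E}
    (h1 : v ∈ intrinsicInterior ℝ T) (h2 : v ∈ T') : T ⊆ T' := by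
  intro y hy
  obtain ⟨z, hz, hvseg⟩ := exists_openSegment_of_mem_intrinsicInterior T h1 hy
  exact (hT'.2.2 y (hTN hy) z (hTN hz) ⟨v, hvseg, h2⟩).1

lemma face_trans {N M T : Set E} (h1 : IsFace N M) (h2 : IsFace M T) : IsFace N T := by
  refine ⟨h2.1, h2.2.1.trans h1.2.1, fun x hx y hy hne => ?_⟩
  obtain ⟨hxM, hyM⟩ := h1.2.2 x hx y hy
    (hne.mono (Set.inter_subset_inter_right _ h2.2.1))
  exact h2.2.2 x hxM y hyM hne


/-- For a proper normal cone `N` of a convex set `C` and every nonzero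
`v ∈ N`: `F⊥(C,v)` is nonempty, `N(C,F⊥(C,v))` is a face of `N`, and the face of
`N(C,F⊥(C,v))` with `v` in its relative interior equals the face of `N` with `v` in its
relative interior. In particular the touching cones of `C` are exactly the nonempty faces
of normal cones of `C`. -/
theorem stmt_14 (C : Set E) (hC : Convex ℝ C) (N : Set E) (hN : IsNormalCone C N)
    (hN1 : N ≠ (((((affineSpan ℝ C).direction)ᗮ : Submodule ℝ E)) : Set E))
    (hN2 : N ≠ Set.univ) :
    ∀ v ∈ N, v ≠ 0 →
      (expFace C v).Nonempty ∧
      IsFace N (normalConeOf C (expFace C v)) ∧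
      (∀ T T', IsFace (normalConeOf C (expFace C v)) T → v ∈ intrinsicInterior ℝ T →
        IsFace N T' → v ∈ intrinsicInterior ℝ T' → T = T') := by
  obtain ⟨F, hF, rfl⟩ := hN
  have hFne : F.Nonempty := by
    by_contra h
    rw [Set.not_nonempty_iff_eq_empty] at h
    subst h
    exact hN2 (by simp [normalConeOf])
  obtain ⟨x₀, hx₀⟩ := Set.Nonempty.intrinsicInterior hF.1 hFne
  have hNconv : Convex ℝ (normalConeOf C F) := by
    apply convex_iInter; intro x; apply convex_iInter; intro _; exact normalCone_convex C x
  intro v hv hv0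
  have hvN : ∀ x ∈ intrinsicInterior ℝ F, v ∈ normalCone C x := mem_normalConeOf.1 hv
  set G := expFace C v with hG_def
  have hGC : G ⊆ C := fun x hx => hx.1
  have riF_sub : intrinsicInterior ℝ F ⊆ G := by
    intro x hx
    refine ⟨hF.2.1 (intrinsicInterior_subset hx), fun y hy => ?_⟩
    have := hvN x hx y hy
    rw [inner_sub_right] at this
    linarith
  have hx₀G : x₀ ∈ G := riF_sub hx₀
  have hGne : G.Nonempty := ⟨x₀, hx₀G⟩
  have hGconv : Convex ℝ G := by
    intro p hp q hq a b ha hb hab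
    refine ⟨hC hp.1 hq.1 ha hb hab, fun y hy => ?_⟩
    have h1 := hp.2 y hy
    have h2 := hq.2 y hy
    rw [inner_add_right, real_inner_smul_right, real_inner_smul_right]
    have h3 : a * ⟪v, y⟫ + b * ⟪v, y⟫ = ⟪v, y⟫ := by rw [← add_mul, hab, one_mul]
    linarith [mul_le_mul_of_nonneg_left h1 ha, mul_le_mul_of_nonneg_left h2 hb]
  have hNCGsub : normalConeOf C G ⊆ normalConeOf C F := by
    intro u hu
    rw [mem_normalConeOf] at hu ⊢
    intro x hx
    obtain ⟨g, hg⟩ := Set.Nonempty.intrinsicInterior hGconv hGne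
    exact (key_lemma hGC hg (riF_sub hx) (hu g hg)).2
  have hNCGconv : Convex ℝ (normalConeOf C G) := by
    apply convex_iInter; intro x; apply convex_iInter; intro _; exact normalCone_convex C x
  have main : ∀ u ∈ normalConeOf C F, ∀ w ∈ normalConeOf C F,
      (openSegment ℝ u w ∩ normalConeOf C G).Nonempty → u ∈ normalConeOf C G := by
    rintro u hu w hw ⟨z, hzseg, hzNCG⟩
    have hzN : z ∈ normalConeOf C F := hNconv.openSegment_subset hu hw hzseg
    rw [mem_normalConeOf] at hzNCG ⊢
    intro x hx
    have hxC : x ∈ C := hGC (intrinsicInterior_subset hx)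
    have hzx : z ∈ normalCone C x := hzNCG x hx
    have h0 : ⟪z, x₀ - x⟫ = 0 := (key_lemma hGC hx hx₀G hzx).1
    have hzval : ⟪z, x - x₀⟫ = 0 := by
      have h2 : x - x₀ = -(x₀ - x) := by abel
      rw [h2, inner_neg_right, h0, neg_zero]
    obtain ⟨a, b, ha, hb, hab, hzeq⟩ := hzseg
    have hu1 : ⟪u, x - x₀⟫ ≤ 0 := mem_normalConeOf.1 hu x₀ hx₀ x hxC
    have hw1 : ⟪w, x - x₀⟫ ≤ 0 := mem_normalConeOf.1 hw x₀ hx₀ x hxC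
    have hcomb : a * ⟪u, x - x₀⟫ + b * ⟪w, x - x₀⟫ = 0 := by
      rw [← real_inner_smul_left, ← real_inner_smul_left, ← inner_add_left, hzeq, hzval]
    have hu0 : ⟪u, x - x₀⟫ = 0 := by nlinarith
    intro y hy
    have h1 : ⟪u, y - x₀⟫ ≤ 0 := mem_normalConeOf.1 hu x₀ hx₀ y hy
    have h2 : y - x = (y - x₀) - (x - x₀) := by abel
    rw [h2, inner_sub_right, hu0]
    linarith
  have hface : IsFace (normalConeOf C F) (normalConeOf C G) := by
    refine ⟨hNCGconv, hNCGsub, fun x hx y hy hne => ?_⟩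
    refine ⟨main x hx y hy hne, main y hy x hx ?_⟩
    rwa [openSegment_symm] at hne
  refine ⟨hGne, hface, ?_⟩
  intro T T' hT hvT hT' hvT'
  have hTface : IsFace (normalConeOf C F) T := face_trans hface hT
  exact subset_antisymm
    (face_sub hT' (hT.2.1.trans hNCGsub) hvT (intrinsicInterior_subset hvT'))
    (face_sub hTface hT'.2.1 hvT' (intrinsicInterior_subset hvT))
end

section
/- Let C ⊆ E be a convex set and let {T_α}_{α∈I} be a nonempty family of touching cones of C. Then the intersection ⋂_{α∈I} T_α is again a touching cone of C, and for every α̃ ∈ I with T_α̃ ≠ E, the intersection ⋂_{α∈I} T_α is a face of T_α̃. -/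
open scoped Pointwise RealInnerProductSpace

variable {E : Type*} [NormedAddCommGroup E] [InnerProductSpace ℝ E] [FiniteDimensional ℝ E]

/-! Each touching cone `T α` is a face of a normal cone `N(C, G α)` and contains `0`; if all
of them are `E`, so is `S = ⋂ α, T α = N(C, ∅)`. Otherwise pick `u` in the relative interior of
`S` and let `F = F⊥(C, u)`. Every `G α` lies in `F`, so `N(C, F) ⊆ N(C, G α)`, and for
`x ∈ G α` the cone `N(C, F)` is a face of `N(C, x)`, being an intersection of the faces
`N(C, x) ∩ N(C, x')`, `x' ∈ F`. As `S ⊆ N(C, x)` has its relative interior point `u` in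
`N(C, F)`, all of `S` lies in `N(C, F)`. Then `S` is a face of `N(C, F)` because each `T α` is
a face of the larger cone `N(C, G α)`, and `S` is a face of `T α` by transitivity through
`N(C, F)` and `N(C, x)`. -/

open Set Topology

theorem isExtreme_iInter_of_subset {𝕜 V ι : Type*} [Semiring 𝕜] [PartialOrder 𝕜]
    [AddCommMonoid V] [SMul 𝕜 V] {A B : ι → Set V} {K : Set V}
    (h : ∀ i, IsExtreme 𝕜 (A i) (B i)) (hKA : ∀ i, K ⊆ A i) (hBK : ⋂ i, B i ⊆ K) :
    IsExtreme 𝕜 K (⋂ i, B i) :=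
  ⟨hBK, fun _ hx _ hy _ hz hseg =>
    mem_iInter.2 fun i => (h i).2 (hKA i hx) (hKA i hy) (mem_iInter.1 hz i) hseg⟩

section NormedSpace

variable {V : Type*} [NormedAddCommGroup V] [NormedSpace ℝ V]

theorem IsExtreme.eq_univ_of_nonempty {B : Set V} (hB : IsExtreme ℝ univ B)
    (hne : B.Nonempty) : B = univ := by
  obtain ⟨z, hz⟩ := hne
  refine eq_univ_of_forall fun w => hB.2 trivial (mem_univ ((2 : ℝ) • z - w)) hz ?_
  exact ⟨1 / 2, 1 / 2, by norm_num, by norm_num, by norm_num, by module⟩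

theorem exists_mem_openSegment_of_mem_intrinsicInterior {S : Set V} {x y : V}
    (hx : x ∈ intrinsicInterior ℝ S) (hy : y ∈ S) : ∃ z ∈ S, x ∈ openSegment ℝ y z := by
  obtain ⟨x, hx, rfl⟩ := hx
  let g : ℝ → affineSpan ℝ S := fun t =>
    ⟨AffineMap.lineMap y (x : V) t, AffineMap.lineMap_mem t (subset_affineSpan ℝ S hy) x.2⟩
  have hg : Continuous g := AffineMap.lineMap_continuous.subtype_mk _
  have hg1 : g 1 = x := Subtype.ext (AffineMap.lineMap_apply_one _ _)
  have hnhds : ∀ᶠ t in 𝓝 (1 : ℝ), g t ∈ (↑) ⁻¹' S :=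
    hg.continuousAt.preimage_mem_nhds (hg1 ▸ mem_interior_iff_mem_nhds.1 hx)
  obtain ⟨t, htS, ht⟩ :=
    ((hnhds.filter_mono nhdsWithin_le_nhds).and (self_mem_nhdsWithin (a := 1) (s := Ioi 1))).exists
  have ht0 : (0 : ℝ) < t := zero_lt_one.trans ht
  refine ⟨_, htS, 1 - t⁻¹, t⁻¹, sub_pos.2 (inv_lt_one_of_one_lt₀ ht), by positivity,
    by ring, ?_⟩
  simp only [g, AffineMap.lineMap_apply_module]
  match_scalars <;> field_simp
  ring

theorem IsExtreme.subset_of_mem_intrinsicInterior {A B S : Set V} {x : V}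
    (hAB : IsExtreme ℝ A B) (hSA : S ⊆ A) (hx : x ∈ intrinsicInterior ℝ S) (hxB : x ∈ B) :
    S ⊆ B := fun y hy => by
  obtain ⟨z, hz, hseg⟩ := exists_mem_openSegment_of_mem_intrinsicInterior hx hy
  exact hAB.2 (hSA hy) (hSA hz) hxB hseg

end NormedSpace

section InnerProductSpace

variable {V : Type*} [NormedAddCommGroup V] [InnerProductSpace ℝ V] {C F G T : Set V} {u x y : V}

theorem isFace_iff_convex_and_isExtreme : IsFace C F ↔ Convex ℝ F ∧ IsExtreme ℝ C F := by
  refine ⟨fun ⟨hF, hFC, h⟩ => ⟨hF, hFC, fun x hx y hy z hz hseg => (h x hx y hy ⟨z, hseg, hz⟩).1⟩,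
    fun ⟨hF, hext⟩ => ⟨hF, hext.1, fun x hx y hy ⟨z, hseg, hz⟩ => ?_⟩⟩
  exact ⟨hext.2 hx hy hz hseg, hext.right_mem_of_mem_openSegment hx hy hz hseg⟩

theorem IsFace.convex (h : IsFace C F) : Convex ℝ F := h.1

theorem IsFace.subset (h : IsFace C F) : F ⊆ C := h.2.1

theorem IsFace.isExtreme (h : IsFace C F) : IsExtreme ℝ C F :=
  (isFace_iff_convex_and_isExtreme.1 h).2

theorem mem_expFace_iff : x ∈ expFace C u ↔ x ∈ C ∧ u ∈ normalCone C x := by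
  simp only [expFace, normalCone, mem_ofPred_eq, inner_sub_right, sub_nonpos]

theorem isExposed_expFace (C : Set V) (u : V) : IsExposed ℝ C (expFace C u) :=
  fun _ => ⟨innerSL ℝ u, rfl⟩

theorem isFace_expFace (hC : Convex ℝ C) (u : V) : IsFace C (expFace C u) :=
  isFace_iff_convex_and_isExtreme.2
    ⟨(isExposed_expFace C u).convex hC, (isExposed_expFace C u).isExtreme⟩

theorem mem_normalConeOf_expFace (C : Set V) (u : V) : u ∈ normalConeOf C (expFace C u) :=
  mem_iInter₂.2 fun _ hx => (mem_expFace_iff.1 (intrinsicInterior_subset hx)).2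

theorem normalConeOf_empty (C : Set V) : normalConeOf C ∅ = univ := by
  simp [normalConeOf]

theorem smul_mem_normalConeOf {t : ℝ} (ht : 0 ≤ t) (hu : u ∈ normalConeOf C F) :
    t • u ∈ normalConeOf C F :=
  mem_iInter₂.2 fun x hx y hy => by
    simpa [real_inner_smul_left] using
      mul_nonpos_of_nonneg_of_nonpos ht (mem_iInter₂.1 hu x hx y hy)

theorem isExtreme_normalCone_inter (hx : x ∈ C) (hy : y ∈ C) :
    IsExtreme ℝ (normalCone C x) (normalCone C x ∩ normalCone C y) := by
  have h : normalCone C x ∩ normalCone C y = expFace (normalCone C x) (y - x) := by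
    ext v
    simp only [expFace, normalCone, mem_inter_iff, mem_ofPred_eq, real_inner_comm _ (y - x)]
    refine ⟨fun ⟨hvx, hvy⟩ => ⟨hvx, fun w hw => ?_⟩, fun ⟨hvx, hv⟩ => ⟨hvx, fun z hz => ?_⟩⟩
    · have := hvy x hx
      rw [← neg_sub, inner_neg_right] at this
      linarith [hw y hy]
    · have := hv 0 (by simp)
      rw [inner_zero_left] at this
      have hsplit : z - y = (z - x) - (y - x) := by abel
      rw [hsplit, inner_sub_right]
      linarith [hvx z hz]
  exact h ▸ (isExposed_expFace _ _).isExtreme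

variable [FiniteDimensional ℝ V]

theorem normalConeOf_subset_normalCone (hFC : F ⊆ C) (hF : Convex ℝ F) (hx : x ∈ F) :
    normalConeOf C F ⊆ normalCone C x := by
  obtain ⟨x₀, hx₀⟩ := Set.Nonempty.intrinsicInterior hF ⟨x, hx⟩
  intro w hw
  have hx₀w : x₀ ∈ expFace C w :=
    mem_expFace_iff.2 ⟨hFC (intrinsicInterior_subset hx₀), mem_iInter₂.1 hw x₀ hx₀⟩
  exact (mem_expFace_iff.1 <|
    (isExposed_expFace C w).isExtreme.subset_of_mem_intrinsicInterior hFC hx₀ hx₀w hx).2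

theorem normalConeOf_anti (hFC : F ⊆ C) (hF : Convex ℝ F) (hGF : G ⊆ F) :
    normalConeOf C F ⊆ normalConeOf C G :=
  subset_iInter₂ fun _ hx =>
    normalConeOf_subset_normalCone hFC hF (hGF (intrinsicInterior_subset hx))

theorem subset_expFace_of_mem_normalConeOf (hGC : G ⊆ C) (hG : Convex ℝ G)
    (hu : u ∈ normalConeOf C G) : G ⊆ expFace C u := fun _ hx =>
  mem_expFace_iff.2 ⟨hGC hx, normalConeOf_subset_normalCone hGC hG hx hu⟩

theorem isExtreme_normalCone_normalConeOf (hFC : F ⊆ C) (hF : Convex ℝ F) (hx : x ∈ F) :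
    IsExtreme ℝ (normalCone C x) (normalConeOf C F) := by
  have h : normalConeOf C F = ⋂ x' ∈ intrinsicInterior ℝ F, normalCone C x ∩ normalCone C x' :=
    subset_antisymm
      (subset_iInter₂ fun x' hx' => subset_inter (normalConeOf_subset_normalCone hFC hF hx)
        (biInter_subset_of_mem hx'))
      (iInter₂_mono fun _ _ => inter_subset_right)
  obtain ⟨x₀, hx₀⟩ := Set.Nonempty.intrinsicInterior hF ⟨x, hx⟩
  have : Nonempty (intrinsicInterior ℝ F) := ⟨⟨x₀, hx₀⟩⟩
  rw [h, biInter_eq_iInter]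
  exact isExtreme_iInter fun x' =>
    isExtreme_normalCone_inter (hFC hx) (hFC (intrinsicInterior_subset x'.2))

end InnerProductSpace

section TouchingCone

variable {V : Type*} [NormedAddCommGroup V] [InnerProductSpace ℝ V] {C G T : Set V}

theorem IsTouchingCone.exists_isFace (h : IsTouchingCone C T) :
    ∃ G, IsFace C G ∧ IsFace (normalConeOf C G) T := by
  obtain ⟨-, _, ⟨G, hG, rfl⟩, hT⟩ := h
  exact ⟨G, hG, hT⟩

theorem IsTouchingCone.convex (h : IsTouchingCone C T) : Convex ℝ T := by
  obtain ⟨G, -, hT⟩ := h.exists_isFace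
  exact hT.convex

theorem IsTouchingCone.zero_mem (h : IsTouchingCone C T) : (0 : V) ∈ T := by
  obtain ⟨G, -, hT⟩ := h.exists_isFace
  obtain ⟨v, hv⟩ := h.1
  have hvN := hT.subset hv
  refine hT.isExtreme.2 (by simpa using smul_mem_normalConeOf le_rfl hvN)
    (smul_mem_normalConeOf zero_le_two hvN) hv ?_
  exact ⟨1 / 2, 1 / 2, by norm_num, by norm_num, by norm_num, by module⟩

theorem IsFace.nonempty_of_normalConeOf (hT : IsFace (normalConeOf C G) T) (hne : T.Nonempty)
    (huniv : T ≠ univ) : G.Nonempty := by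
  refine nonempty_iff_ne_empty.2 fun hG => huniv (IsExtreme.eq_univ_of_nonempty ?_ hne)
  simpa [hG, normalConeOf_empty] using hT.isExtreme

theorem isTouchingCone_univ (C : Set V) : IsTouchingCone C univ := by
  have hempty : IsFace C ∅ := isFace_iff_convex_and_isExtreme.2
    ⟨convex_empty, empty_subset C, fun _ _ _ _ _ h => h.elim⟩
  exact ⟨univ_nonempty, univ, ⟨∅, hempty, (normalConeOf_empty C).symm⟩,
    isFace_iff_convex_and_isExtreme.2 ⟨convex_univ, .rfl⟩⟩

end TouchingCone

theorem stmt_15_general (C : Set E) (hC : Convex ℝ C) {ι : Type*}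
    (T : ι → Set E) (hT : ∀ α, IsTouchingCone C (T α)) :
    IsTouchingCone C (⋂ α, T α) ∧
    ∀ α, T α ≠ Set.univ → IsFace (T α) (⋂ α', T α') := by
  have hS : Convex ℝ (⋂ α, T α) := convex_iInter fun α => (hT α).convex
  by_cases huniv : ∀ α, T α = univ
  · simp only [huniv, iInter_univ]
    exact ⟨isTouchingCone_univ C, fun _ h => absurd rfl h⟩
  obtain ⟨β, hβ⟩ := not_forall.1 huniv
  choose G hG hTG using fun α => (hT α).exists_isFace
  have hGne : ∀ α, T α ≠ univ → (G α).Nonempty := fun α =>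
    (hTG α).nonempty_of_normalConeOf (hT α).1
  have hSne : (⋂ α, T α).Nonempty := ⟨0, mem_iInter.2 fun α => (hT α).zero_mem⟩
  obtain ⟨u, hu⟩ := hSne.intrinsicInterior hS
  set F := expFace C u
  have hF : IsFace C F := isFace_expFace hC u
  have hGF : ∀ α, G α ⊆ F := fun α => subset_expFace_of_mem_normalConeOf (hG α).subset
    (hG α).convex ((hTG α).subset (mem_iInter.1 (intrinsicInterior_subset hu) α))
  have hFG : ∀ α, normalConeOf C F ⊆ normalConeOf C (G α) := fun α =>
    normalConeOf_anti hF.subset hF.convex (hGF α)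
  have hTx : ∀ α, ∀ x ∈ G α, T α ⊆ normalCone C x := fun α x hx =>
    (hTG α).subset.trans (normalConeOf_subset_normalCone (hG α).subset (hG α).convex hx)
  have hFx : ∀ α, ∀ x ∈ G α, IsExtreme ℝ (normalCone C x) (normalConeOf C F) := fun α x hx =>
    isExtreme_normalCone_normalConeOf hF.subset hF.convex (hGF α hx)
  obtain ⟨x, hx⟩ := hGne β hβ
  have hSF : ⋂ α, T α ⊆ normalConeOf C F := (hFx β x hx).subset_of_mem_intrinsicInterior
    ((iInter_subset T β).trans (hTx β x hx)) hu (mem_normalConeOf_expFace C u)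
  have hSext : IsExtreme ℝ (normalConeOf C F) (⋂ α, T α) :=
    isExtreme_iInter_of_subset (fun α => (hTG α).isExtreme) hFG hSF
  refine ⟨⟨hSne, _, ⟨F, hF, rfl⟩, isFace_iff_convex_and_isExtreme.2 ⟨hS, hSext⟩⟩,
    fun α hα => isFace_iff_convex_and_isExtreme.2 ⟨hS, ?_⟩⟩
  obtain ⟨y, hy⟩ := hGne α hα
  exact ((hFx α y hy).trans hSext).mono (hTx α y hy) (iInter_subset T α)

/-- A nonempty family of touching cones of a convex set `C` has
intersection a touching cone of `C`, and the intersection is a face of every member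
`T α̃` with `T α̃ ≠ E`. -/
theorem stmt_15 (C : Set E) (hC : Convex ℝ C) {ι : Type*} [Nonempty ι]
    (T : ι → Set E) (hT : ∀ α, IsTouchingCone C (T α)) :
    IsTouchingCone C (⋂ α, T α) ∧
    ∀ α, T α ≠ Set.univ → IsFace (T α) (⋂ α', T α') :=
  stmt_15_general C hC T hT
end
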